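/- Fix t ∈ ℝ, let ω := e^{iπ/4}, and define q : ℝ → ℝ by q(y) := Im[ (ω/π) ∫_0^{∞} e^{−u⁴/4 − i t u²/2} ( e^{ω u y} − e^{−ω u y} ) du ]. Then q is three times continuously differentiable on ℝ and satisfies the third-order ODE q'''(y) − t·q'(y) + y·q(y) = 0 for all y ∈ ℝ. -/

import Mathlib

open MeasureTheory

noncomputable section

/-- `ω = e^{iπ/4}`. -/
def pomega : ℂ := Complex.exp (Complex.I * Real.pi / 4)

/-- The Pearcey function
`q(y) = Im[(ω/π) ∫_0^∞ e^{-u⁴/4 - itu²/2} (e^{ωuy} - e^{-ωuy}) du]`. -/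
def pearceyQ (t : ℝ) (y : ℝ) : ℝ :=
  (pomega / (Real.pi : ℂ) *
    ∫ u in Set.Ioi (0 : ℝ),
      Complex.exp (-(u : ℂ) ^ 4 / 4 - Complex.I * (t : ℂ) * (u : ℂ) ^ 2 / 2) *
        (Complex.exp (pomega * (u : ℂ) * (y : ℂ))
          - Complex.exp (-(pomega * (u : ℂ) * (y : ℂ))))).im

/- ### Auxiliary definitions -/

def pf (t : ℝ) (u : ℝ) : ℂ :=
  Complex.exp (-(u : ℂ) ^ 4 / 4 - Complex.I * (t : ℂ) * (u : ℂ) ^ 2 / 2)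

def pK (t : ℝ) (n : ℕ) (y u : ℝ) : ℂ :=
  pf t u * ((pomega * (u : ℂ)) ^ n *
    (Complex.exp (pomega * (u : ℂ) * (y : ℂ))
      - (-1 : ℂ) ^ n * Complex.exp (-(pomega * (u : ℂ) * (y : ℂ)))))

def pG (t : ℝ) (n : ℕ) (y : ℝ) : ℂ := ∫ u in Set.Ioi (0 : ℝ), pK t n y u

def pQ (t : ℝ) (n : ℕ) (y : ℝ) : ℝ := (pomega / (Real.pi : ℂ) * pG t n y).im

lemma pearceyQ_eq (t : ℝ) : pearceyQ t = pQ t 0 := by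
  funext y
  simp only [pearceyQ, pQ, pG, pK, pf, pow_zero, one_mul]

lemma pomega_sq : pomega ^ 2 = Complex.I := by
  rw [pomega, ← Complex.exp_nat_mul]
  rw [show ((2 : ℕ) : ℂ) * (Complex.I * (Real.pi : ℂ) / 4) = ((Real.pi / 2 : ℝ) : ℂ) * Complex.I by
    push_cast; ring]
  rw [Complex.exp_mul_I]
  push_cast
  rw [Complex.cos_pi_div_two, Complex.sin_pi_div_two]
  ring

lemma pomega_pow4 : pomega ^ 4 = -1 := by
  rw [show (4 : ℕ) = 2 * 2 from rfl, pow_mul, pomega_sq, Complex.I_sq]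

lemma pomega_ne_zero : pomega ≠ 0 := Complex.exp_ne_zero _

lemma abs_pomega : ‖pomega‖ = 1 := by
  rw [pomega, Complex.norm_exp]
  norm_num [Complex.div_re, Complex.mul_re]

lemma norm_pf (t u : ℝ) : ‖pf t u‖ = Real.exp (-(u ^ 4) / 4) := by
  rw [pf, show -(u : ℂ) ^ 4 / 4 - Complex.I * (t : ℂ) * (u : ℂ) ^ 2 / 2
      = ((-(u ^ 4) / 4 : ℝ) : ℂ) + ((-(t * u ^ 2 / 2) : ℝ) : ℂ) * Complex.I by push_cast; ring,
    Complex.norm_exp]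
  simp [← Complex.ofReal_pow]

lemma re_pomega_mul (u y : ℝ) : (pomega * (u : ℂ) * (y : ℂ)).re = pomega.re * u * y := by
  simp [Complex.mul_re]

lemma abs_re_pomega_le : |pomega.re| ≤ 1 := by
  calc |pomega.re| ≤ ‖pomega‖ := Complex.abs_re_le_norm _
  _ = 1 := abs_pomega

lemma norm_exp_pomega_le (u y : ℝ) (hu : 0 ≤ u) :
    ‖Complex.exp (pomega * (u : ℂ) * (y : ℂ))‖ ≤ Real.exp (|y| * u) := by
  rw [Complex.norm_exp, re_pomega_mul]
  apply Real.exp_le_exp.2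
  calc pomega.re * u * y ≤ |pomega.re * u * y| := le_abs_self _
  _ = |pomega.re| * u * |y| := by rw [abs_mul, abs_mul, abs_of_nonneg hu]
  _ ≤ 1 * u * |y| := by
      apply mul_le_mul_of_nonneg_right (mul_le_mul_of_nonneg_right abs_re_pomega_le hu) (abs_nonneg _)
  _ = |y| * u := by ring

lemma norm_exp_neg_pomega_le (u y : ℝ) (hu : 0 ≤ u) :
    ‖Complex.exp (-(pomega * (u : ℂ) * (y : ℂ)))‖ ≤ Real.exp (|y| * u) := by
  rw [Complex.norm_exp, Complex.neg_re, re_pomega_mul]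
  apply Real.exp_le_exp.2
  calc -(pomega.re * u * y) ≤ |(-(pomega.re * u * y))| := le_abs_self _
  _ = |pomega.re| * u * |y| := by rw [abs_neg, abs_mul, abs_mul, abs_of_nonneg hu]
  _ ≤ 1 * u * |y| := by
      apply mul_le_mul_of_nonneg_right (mul_le_mul_of_nonneg_right abs_re_pomega_le hu) (abs_nonneg _)
  _ = |y| * u := by ring

lemma norm_pK_le (t : ℝ) (n : ℕ) {y u R : ℝ} (hu : 0 ≤ u) (hy : |y| ≤ R) :
    ‖pK t n y u‖ ≤ 2 * (u ^ n * Real.exp (R * u - u ^ 4 / 4)) := by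
  have h1 : ‖(pomega * (u : ℂ)) ^ n‖ = u ^ n := by
    rw [norm_pow, norm_mul, abs_pomega, Complex.norm_real, Real.norm_eq_abs,
      abs_of_nonneg hu, one_mul]
  have hE : ∀ z : ℂ, ‖z‖ ≤ Real.exp (|y| * u) → ‖(-1:ℂ)^n * z‖ ≤ Real.exp (|y| * u) := by
    intro z hz
    rw [norm_mul, norm_pow, norm_neg, norm_one, one_pow, one_mul]; exact hz
  have h2 : ‖Complex.exp (pomega * (u : ℂ) * (y : ℂ))
      - (-1 : ℂ) ^ n * Complex.exp (-(pomega * (u : ℂ) * (y : ℂ)))‖ ≤ 2 * Real.exp (|y| * u) := by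
    calc ‖_ - _‖ ≤ _ + _ := norm_sub_le _ _
    _ ≤ Real.exp (|y| * u) + Real.exp (|y| * u) :=
        add_le_add (norm_exp_pomega_le u y hu) (hE _ (norm_exp_neg_pomega_le u y hu))
    _ = 2 * Real.exp (|y| * u) := by ring
  rw [pK, norm_mul, norm_mul, norm_pf, h1]
  calc Real.exp (-(u^4)/4) * (u ^ n * ‖_‖) ≤
      Real.exp (-(u^4)/4) * (u ^ n * (2 * Real.exp (|y| * u))) := by
        apply mul_le_mul_of_nonneg_left (mul_le_mul_of_nonneg_left h2 (pow_nonneg hu n))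
          (Real.exp_nonneg _)
  _ = 2 * (u ^ n * Real.exp (|y| * u - u ^ 4 / 4)) := by
      rw [show |y| * u - u ^ 4 / 4 = -(u ^ 4) / 4 + |y| * u by ring, Real.exp_add]; ring
  _ ≤ 2 * (u ^ n * Real.exp (R * u - u ^ 4 / 4)) := by
      have hle : Real.exp (|y| * u - u ^ 4 / 4) ≤ Real.exp (R * u - u ^ 4 / 4) :=
        Real.exp_le_exp.2 (by nlinarith [mul_le_mul_of_nonneg_right hy hu])
      nlinarith [pow_nonneg hu n, Real.exp_nonneg (|y| * u - u ^ 4 / 4)]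

lemma young (b u : ℝ) : b * u ≤ u ^ 4 / 4 + b ^ 2 + 1 := by
  nlinarith [sq_nonneg (b - u), sq_nonneg (u ^ 2 - 1), sq_nonneg u, sq_nonneg b]

lemma integrable_aux (n : ℕ) (c : ℝ) :
    IntegrableOn (fun u : ℝ => u ^ n * Real.exp (c * u - u ^ 4 / 4)) (Set.Ioi 0) := by
  have hg : IntegrableOn (fun u : ℝ => Real.exp ((n + c + 1) ^ 2 + 1) * Real.exp (-u))
      (Set.Ioi (0:ℝ)) := by
    have := (exp_neg_integrableOn_Ioi (0:ℝ) (one_pos)).const_mul (Real.exp ((n + c + 1) ^ 2 + 1))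
    simpa [IntegrableOn] using this
  apply Integrable.mono' hg
  · exact ((continuous_pow n).mul
      ((continuous_const.mul continuous_id).sub
        ((continuous_pow 4).div_const 4)).rexp).aestronglyMeasurable
  · filter_upwards [ae_restrict_mem measurableSet_Ioi] with u hu
    have hu0 : (0:ℝ) ≤ u := le_of_lt hu
    have h1 : u ^ n ≤ Real.exp ((n:ℝ) * u) := by
      rw [Real.exp_nat_mul]
      exact pow_le_pow_left₀ hu0 (by linarith [Real.add_one_le_exp u]) n
    have h2 : (n + c + 1) * u ≤ u ^ 4 / 4 + (n + c + 1) ^ 2 + 1 := young _ u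
    rw [Real.norm_eq_abs, abs_of_nonneg (by positivity)]
    calc u ^ n * Real.exp (c * u - u ^ 4 / 4)
        ≤ Real.exp ((n:ℝ) * u) * Real.exp (c * u - u ^ 4 / 4) :=
          mul_le_mul_of_nonneg_right h1 (Real.exp_nonneg _)
    _ = Real.exp ((n:ℝ) * u + (c * u - u ^ 4 / 4)) := (Real.exp_add _ _).symm
    _ ≤ Real.exp (((n + c + 1) ^ 2 + 1) + -u) := Real.exp_le_exp.2 (by nlinarith)
    _ = Real.exp ((n + c + 1) ^ 2 + 1) * Real.exp (-u) := Real.exp_add _ _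

lemma continuous_pK (t : ℝ) (n : ℕ) (y : ℝ) : Continuous (fun u : ℝ => pK t n y u) := by
  unfold pK pf
  fun_prop

lemma integrable_pK (t : ℝ) (n : ℕ) (y : ℝ) :
    IntegrableOn (fun u : ℝ => pK t n y u) (Set.Ioi 0) := by
  apply Integrable.mono' (((integrable_aux n |y|).const_mul 2))
  · exact (continuous_pK t n y).aestronglyMeasurable
  · filter_upwards [ae_restrict_mem measurableSet_Ioi] with u hu
    exact norm_pK_le t n (le_of_lt hu) le_rfl

lemma hasDerivAt_pK (t : ℝ) (n : ℕ) (u y : ℝ) :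
    HasDerivAt (fun y : ℝ => pK t n y u) (pK t (n + 1) y u) y := by
  have h1 : HasDerivAt (fun z : ℂ => pomega * (u : ℂ) * z) (pomega * (u : ℂ)) (y : ℂ) := by
    simpa using (hasDerivAt_id ((y : ℝ) : ℂ)).const_mul (pomega * (u : ℂ))
  have h2 := h1.cexp
  have h3 := (h1.neg.cexp).const_mul ((-1 : ℂ) ^ n)
  have h4 := ((h2.sub h3).const_mul ((pomega * (u : ℂ)) ^ n)).const_mul (pf t u)
  have h5 := h4.comp_ofReal
  convert h5 using 1
  · funext y'
    simp only [pK, Pi.sub_apply, Pi.neg_apply]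
  simp only [pK, Pi.neg_apply]
  ring

lemma hasDerivAt_pG (t : ℝ) (n : ℕ) (y : ℝ) :
    HasDerivAt (pG t n) (pG t (n + 1) y) y := by
  have key := hasDerivAt_integral_of_dominated_loc_of_deriv_le
    (μ := volume.restrict (Set.Ioi (0:ℝ)))
    (F := fun (x : ℝ) (u : ℝ) => pK t n x u)
    (F' := fun (x : ℝ) (u : ℝ) => pK t (n + 1) x u)
    (x₀ := y)
    (bound := fun u => 2 * (u ^ (n + 1) * Real.exp ((|y| + 1) * u - u ^ 4 / 4)))
    (s := Metric.ball y 1) (Metric.ball_mem_nhds y one_pos)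
    (Filter.Eventually.of_forall fun x => (continuous_pK t n x).aestronglyMeasurable)
    (integrable_pK t n y)
    ((continuous_pK t (n + 1) y).aestronglyMeasurable)
    ?_ ((integrable_aux (n + 1) (|y| + 1)).const_mul 2) ?_
  · exact key.2
  · filter_upwards [ae_restrict_mem measurableSet_Ioi] with u hu
    intro x hx
    apply norm_pK_le t (n + 1) (le_of_lt hu)
    have := mem_ball_iff_norm.1 hx
    rw [Real.norm_eq_abs] at this
    calc |x| = |x - y + y| := by ring_nf
    _ ≤ |x - y| + |y| := abs_add_le _ _
    _ ≤ |y| + 1 := by linarith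
  · filter_upwards with u
    intro x _
    exact hasDerivAt_pK t n u x

lemma hasDerivAt_pQ (t : ℝ) (n : ℕ) (y : ℝ) :
    HasDerivAt (pQ t n) (pQ t (n + 1) y) y := by
  have h := (hasDerivAt_pG t n y).const_mul (pomega / (Real.pi : ℂ))
  exact Complex.imCLM.hasFDerivAt.comp_hasDerivAt y h

lemma deriv_pQ (t : ℝ) (n : ℕ) : deriv (pQ t n) = pQ t (n + 1) :=
  funext fun y => (hasDerivAt_pQ t n y).deriv

lemma differentiable_pQ (t : ℝ) (n : ℕ) : Differentiable ℝ (pQ t n) :=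
  fun y => (hasDerivAt_pQ t n y).differentiableAt

lemma contDiff_pQ (t : ℝ) : ContDiff ℝ 3 (pQ t 0) := by
  rw [show (3 : WithTop ℕ∞) = 2 + 1 by rfl, contDiff_succ_iff_deriv]
  refine ⟨differentiable_pQ t 0, by simp, ?_⟩
  rw [deriv_pQ, show (2 : WithTop ℕ∞) = 1 + 1 by rfl, contDiff_succ_iff_deriv]
  refine ⟨differentiable_pQ t 1, by simp, ?_⟩
  rw [deriv_pQ, show (1 : WithTop ℕ∞) = 0 + 1 by rfl, contDiff_succ_iff_deriv]
  refine ⟨differentiable_pQ t 2, by simp, ?_⟩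
  rw [deriv_pQ, contDiff_zero]
  exact (differentiable_pQ t 3).continuous

lemma iteratedDeriv_pQ (t : ℝ) : iteratedDeriv 3 (pQ t 0) = pQ t 3 := by
  rw [show (3 : ℕ) = 2 + 1 from rfl, iteratedDeriv_succ,
    show (2 : ℕ) = 1 + 1 from rfl, iteratedDeriv_succ, iteratedDeriv_one,
    deriv_pQ, deriv_pQ, deriv_pQ]

def pH (t y : ℝ) (u : ℝ) : ℂ :=
  pf t u * (Complex.exp (pomega * (u : ℂ) * (y : ℂ))
    + Complex.exp (-(pomega * (u : ℂ) * (y : ℂ))))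

lemma neg_I_pomega_ne_zero : -Complex.I * pomega ≠ 0 := by
  simp [Complex.I_ne_zero, pomega_ne_zero]

lemma hasDerivAt_pH (t y : ℝ) (u : ℝ) :
    HasDerivAt (pH t y)
      ((-Complex.I * pomega)⁻¹ *
        (pK t 3 y u - (t : ℂ) * pK t 1 y u + (y : ℂ) * pK t 0 y u)) u := by
  have hz4 := ((hasDerivAt_pow 4 ((u : ℝ) : ℂ)).neg.div_const 4)
  have hz2 := ((hasDerivAt_pow 2 ((u : ℝ) : ℂ)).const_mul (Complex.I * (t : ℂ))).div_const 2
  have hexp := (hz4.sub hz2).cexp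
  have hlin := ((hasDerivAt_id' (x := ((u : ℝ) : ℂ))).const_mul pomega).mul_const ((y : ℝ) : ℂ)
  have hE1 := hlin.cexp
  have hE2 := hlin.neg.cexp
  have htot := (hexp.mul (hE1.add hE2)).comp_ofReal
  have htot' : HasDerivAt (pH t y) _ u := htot
  convert htot' using 1
  rw [inv_mul_eq_iff_eq_mul₀ neg_I_pomega_ne_zero]
  simp only [pK, pf, Pi.add_apply, Pi.neg_apply, Pi.sub_apply]
  rw [show Complex.I = pomega ^ 2 from pomega_sq.symm]
  linear_combination (Complex.exp (-(u : ℂ) ^ 4 / 4 - pomega ^ 2 * (t : ℂ) * (u : ℂ) ^ 2 / 2) *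
    ((y : ℂ) * (Complex.exp (pomega * (u : ℂ) * (y : ℂ))
        - Complex.exp (-(pomega * (u : ℂ) * (y : ℂ))))
      - pomega * (t : ℂ) * (u : ℂ) * (Complex.exp (pomega * (u : ℂ) * (y : ℂ))
        + Complex.exp (-(pomega * (u : ℂ) * (y : ℂ)))))) * pomega_pow4

lemma norm_pH_le (t y : ℝ) {u : ℝ} (hu : 0 ≤ u) :
    ‖pH t y u‖ ≤ 2 * Real.exp (|y| * u - u ^ 4 / 4) := by
  rw [pH, norm_mul, norm_pf]
  calc Real.exp (-(u ^ 4) / 4) * ‖_‖ ≤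
      Real.exp (-(u ^ 4) / 4) * (Real.exp (|y| * u) + Real.exp (|y| * u)) := by
        apply mul_le_mul_of_nonneg_left _ (Real.exp_nonneg _)
        exact (norm_add_le _ _).trans
          (add_le_add (norm_exp_pomega_le u y hu) (norm_exp_neg_pomega_le u y hu))
  _ = 2 * Real.exp (|y| * u - u ^ 4 / 4) := by
      rw [show |y| * u - u ^ 4 / 4 = -(u ^ 4) / 4 + |y| * u by ring, Real.exp_add]; ring

lemma tendsto_pH (t y : ℝ) : Filter.Tendsto (pH t y) Filter.atTop (nhds 0) := by
  apply squeeze_zero_norm' (a := fun u => 2 * Real.exp (|y| * u - u ^ 4 / 4))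
  · filter_upwards [Filter.eventually_ge_atTop (0 : ℝ)] with u hu
    exact norm_pH_le t y hu
  · have h1 : Filter.Tendsto (fun u : ℝ => |y| * u - u ^ 4 / 4) Filter.atTop Filter.atBot := by
      apply Filter.tendsto_atBot_mono' Filter.atTop
        (f₁ := fun u : ℝ => ((|y| + 1) ^ 2 + 1) + -u)
      · filter_upwards [Filter.eventually_ge_atTop (0 : ℝ)] with u hu
        have := young (|y| + 1) u
        nlinarith
      · exact Filter.tendsto_atBot_add_const_left _ _ Filter.tendsto_neg_atTop_atBot
    have h2 := (Real.tendsto_exp_atBot.comp h1).const_mul (2 : ℝ)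
    simpa using h2

lemma pH_zero (t y : ℝ) : pH t y 0 = 2 := by
  simp [pH, pf]
  norm_num

lemma comb_integrable (t y : ℝ) :
    IntegrableOn (fun u : ℝ =>
      pK t 3 y u - (t : ℂ) * pK t 1 y u + (y : ℂ) * pK t 0 y u) (Set.Ioi 0) :=
  ((integrable_pK t 3 y).sub ((integrable_pK t 1 y).const_mul _)).add
    ((integrable_pK t 0 y).const_mul _)

lemma key_integral (t y : ℝ) :
    pG t 3 y - (t : ℂ) * pG t 1 y + (y : ℂ) * pG t 0 y = 2 * Complex.I * pomega := by
  have hint := comb_integrable t y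
  have h1 : ∫ u in Set.Ioi (0:ℝ), (-Complex.I * pomega)⁻¹ *
      (pK t 3 y u - (t : ℂ) * pK t 1 y u + (y : ℂ) * pK t 0 y u) = 0 - pH t y 0 := by
    apply MeasureTheory.integral_Ioi_of_hasDerivAt_of_tendsto
    · exact (Continuous.continuousWithinAt (by unfold pH pf; fun_prop))
    · exact fun x _ => hasDerivAt_pH t y x
    · exact hint.const_mul _
    · exact tendsto_pH t y
  rw [MeasureTheory.integral_const_mul, pH_zero] at h1
  have h2 : ∫ u in Set.Ioi (0:ℝ),
      (pK t 3 y u - (t : ℂ) * pK t 1 y u + (y : ℂ) * pK t 0 y u)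
      = pG t 3 y - (t : ℂ) * pG t 1 y + (y : ℂ) * pG t 0 y := by
    have hA : Integrable (fun u : ℝ => pK t 3 y u - (t : ℂ) * pK t 1 y u)
        (volume.restrict (Set.Ioi 0)) :=
      (integrable_pK t 3 y).sub ((integrable_pK t 1 y).const_mul ((t : ℂ)))
    have hB : Integrable (fun u : ℝ => (y : ℂ) * pK t 0 y u)
        (volume.restrict (Set.Ioi 0)) :=
      (integrable_pK t 0 y).const_mul _
    rw [MeasureTheory.integral_add hA hB,
      MeasureTheory.integral_sub (integrable_pK t 3 y) ((integrable_pK t 1 y).const_mul _),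
      MeasureTheory.integral_const_mul, MeasureTheory.integral_const_mul]
    rfl
  rw [h2] at h1
  rw [inv_mul_eq_iff_eq_mul₀ neg_I_pomega_ne_zero] at h1
  linear_combination h1

lemma ode_pQ (t y : ℝ) : pQ t 3 y - t * pQ t 1 y + y * pQ t 0 y = 0 := by
  have him : pQ t 3 y - t * pQ t 1 y + y * pQ t 0 y
      = (pomega / (Real.pi : ℂ) *
          (pG t 3 y - (t : ℂ) * pG t 1 y + (y : ℂ) * pG t 0 y)).im := by
    simp only [pQ, mul_sub, mul_add]
    rw [Complex.add_im, Complex.sub_im]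
    rw [show pomega / (Real.pi : ℂ) * ((t : ℂ) * pG t 1 y)
        = (t : ℂ) * (pomega / (Real.pi : ℂ) * pG t 1 y) by ring]
    rw [show pomega / (Real.pi : ℂ) * ((y : ℂ) * pG t 0 y)
        = (y : ℂ) * (pomega / (Real.pi : ℂ) * pG t 0 y) by ring]
    simp [Complex.mul_im]
  rw [him, key_integral]
  have : pomega / (Real.pi : ℂ) * (2 * Complex.I * pomega)
      = ((-2 / Real.pi : ℝ) : ℂ) := by
    have hpi : ((Real.pi : ℝ) : ℂ) ≠ 0 := by
      exact_mod_cast Complex.ofReal_ne_zero.2 Real.pi_ne_zero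
    push_cast
    field_simp
    linear_combination Complex.I * pomega_sq + Complex.I_sq
  rw [this, Complex.ofReal_im]

/-- `q` is three times continuously differentiable and satisfies
`q''' - t q' + y q = 0`. -/
theorem statement17 (t : ℝ) :
    ContDiff ℝ 3 (pearceyQ t) ∧
    ∀ y : ℝ,
      iteratedDeriv 3 (pearceyQ t) y - t * deriv (pearceyQ t) y + y * pearceyQ t y = 0 := by
  rw [pearceyQ_eq]
  refine ⟨contDiff_pQ t, fun y => ?_⟩
  rw [iteratedDeriv_pQ, deriv_pQ]
  exact ode_pQ t y

end
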